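/- Let 0≤α and f∈L_σ(α,φ): f bi-univalent on 𝔻 with (zf'(z)/f(z))^α (1+zf''(z)/f'(z))^{1−α} ≺ φ(z) and the analogous subordination for g=f⁻¹, where φ(z)=1+B₁z+B₂z²+⋯, B₁>0, and 2(α²−3α+4)B₁²+4(α−2)²(B₁−B₂)≠0. Then |a₂| ≤ 2B₁√B₁ / √|2(α²−3α+4)B₁²+4(α−2)²(B₁−B₂)|. -/

import Mathlib

/-!
Write `a₂, a₃` for the Taylor coefficients of `f`, `u₁, u₂` and `v₁, v₂` for those of the Schwarz
functions, `B₁, B₂` for those of `φ`. Expanding both sides of each subordination to second order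
at `0` (little-o expansions pushed through inversion, `log` and `exp`) gives
`(2 - α) a₂ = B₁ u₁` and `2 (3 - 2α) a₃ + (α² + 5α - 8) a₂² / 2 = B₁ u₂ + B₂ u₁²`, and the same
for `g`, whose coefficients are `-a₂` and `2 a₂² - a₃` because `g ∘ f = id`. Adding the two second
relations eliminates `a₃`; eliminating `u₁²` and `v₁²` with the first ones leaves
`D a₂² = 2 B₁³ ((u₂ + u₁²) + (v₂ + v₁²))`, where `D` is the quantity under the root. Finally the
Schwarz–Pick inequality applied to `u(z)/z` gives `|u₂| ≤ 1 - |u₁|²`, so `|u₂ + u₁²| ≤ 1`, and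
likewise for `v`.
-/

open Metric Complex Filter Topology

/-- n-th Taylor coefficient of `f` at `0`. -/
noncomputable def tc (f : ℂ → ℂ) (n : ℕ) : ℂ := iteratedDeriv n f 0 / n.factorial

open Asymptotics ComplexConjugate

def HasExpansion (l : Filter ℂ) (q P : ℂ → ℂ) (n : ℕ) : Prop :=
  (fun z => q z - P z) =o[l] fun z => z ^ n

namespace HasExpansion

variable {l l' : Filter ℂ} {p q w ψ P Q R S W Ψ : ℂ → ℂ} {n : ℕ}

theorem refl (l : Filter ℂ) (q : ℂ → ℂ) (n : ℕ) : HasExpansion l q q n := by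
  simp [HasExpansion]

theorem mono (h : HasExpansion l q P n) (hl : l' ≤ l) : HasExpansion l' q P n :=
  IsLittleO.mono h hl

theorem congr_left (h : HasExpansion l q P n) (hq : q =ᶠ[l] p) : HasExpansion l p P n :=
  h.congr' (hq.mono fun z hz => by simp only [hz]) EventuallyEq.rfl

theorem congr_right (h : HasExpansion l q P n) (hP : P =ᶠ[l] Q) : HasExpansion l q Q n :=
  h.congr' (hP.mono fun z hz => by simp only [hz]) EventuallyEq.rfl

theorem symm (h : HasExpansion l q P n) : HasExpansion l P q n :=
  h.neg_left.congr_left fun z => by ring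

theorem trans (h : HasExpansion l q P n) (h' : HasExpansion l P Q n) : HasExpansion l q Q n :=
  (h.add h').congr_left fun z => by ring

theorem add (hp : HasExpansion l p P n) (hq : HasExpansion l q Q n) :
    HasExpansion l (fun z => p z + q z) (fun z => P z + Q z) n :=
  (IsLittleO.add hp hq).congr_left fun z => by ring

theorem const_mul (h : HasExpansion l q P n) (c : ℂ) :
    HasExpansion l (fun z => c * q z) (fun z => c * P z) n :=
  (IsLittleO.const_mul_left h c).congr_left fun z => by ring

theorem mul (hp : HasExpansion l p P n) (hq : HasExpansion l q Q n)
    (hpb : p =O[l] fun _ => (1 : ℂ)) (hQb : Q =O[l] fun _ => (1 : ℂ)) :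
    HasExpansion l (fun z => p z * q z) (fun z => P z * Q z) n := by
  unfold HasExpansion at hp hq ⊢
  have h₁ := hpb.mul_isLittleO hq
  have h₂ := hp.mul_isBigO hQb
  simp only [one_mul, mul_one] at h₁ h₂
  exact (h₁.add h₂).congr_left fun z => by ring

theorem pow (h : HasExpansion l w W n) (hw : w =O[l] fun _ => (1 : ℂ))
    (hW : W =O[l] fun _ => (1 : ℂ)) :
    ∀ k : ℕ, HasExpansion l (fun z => w z ^ k) (fun z => W z ^ k) n
  | 0 => by simpa using refl l (fun _ => 1) n
  | k + 1 => by
    have hwk : (fun z => w z ^ k) =O[l] fun _ => (1 : ℂ) := by simpa using hw.pow k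
    simpa only [pow_succ] using (pow h hw hW k).mul h hwk hW

theorem comp (hψ : HasExpansion (𝓝 0) ψ Ψ n) (hw : Tendsto w l (𝓝 0))
    (hwO : w =O[l] fun z => z) :
    HasExpansion l (fun z => ψ (w z)) (fun z => Ψ (w z)) n :=
  (IsLittleO.comp_tendsto hψ hw).trans_isBigO (hwO.pow n)

theorem of_isBigO (h : (fun z => q z - P z) =O[l] fun z => z ^ (n + 1)) (hl : l ≤ 𝓝 0) :
    HasExpansion l q P n :=
  h.trans_isLittleO ((isLittleO_pow_pow n.lt_succ_self).mono hl)

theorem trunc (h : HasExpansion l q P n) (hl : l ≤ 𝓝 0) (hS : ContinuousAt S 0)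
    (hPR : ∀ᶠ z in l, P z = R z + z ^ (n + 1) * S z) : HasExpansion l q R n := by
  have hrem : (fun z => z ^ (n + 1) * S z) =O[l] fun z => z ^ (n + 1) := by
    simpa using (isBigO_refl (fun z : ℂ => z ^ (n + 1)) l).mul
      ((hS.tendsto.mono_left hl).isBigO_one ℂ)
  refine (IsLittleO.add h (hrem.trans_isLittleO ((isLittleO_pow_pow n.lt_succ_self).mono hl))
    |>.congr' ?_ EventuallyEq.rfl)
  filter_upwards [hPR] with z hz
  rw [hz]
  ring

theorem tendsto (h : HasExpansion l q P n) (hl : l ≤ 𝓝 0) (hP : ContinuousAt P 0) :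
    Tendsto q l (𝓝 (P 0)) := by
  have hpow : (fun z : ℂ => z ^ n) =O[l] fun _ => (1 : ℂ) :=
    (((continuous_pow n).tendsto 0).mono_left hl).isBigO_one ℂ
  have hrem : Tendsto (fun z => q z - P z) l (𝓝 0) :=
    (isLittleO_one_iff ℂ).1 (IsLittleO.trans_isBigO h hpow)
  simpa using hrem.add (hP.tendsto.mono_left hl)

theorem isBigO_one (h : HasExpansion l q P n) (hl : l ≤ 𝓝 0) (hP : ContinuousAt P 0) :
    q =O[l] fun _ => (1 : ℂ) :=
  (h.tendsto hl hP).isBigO_one ℂ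

theorem mul_id (h : HasExpansion l q P n) :
    HasExpansion l (fun z => z * q z) (fun z => z * P z) (n + 1) :=
  ((isBigO_refl (fun z : ℂ => z) l).mul_isLittleO h).congr (fun z => by ring) (fun z => by ring)

theorem div_id (h : HasExpansion (𝓝[≠] 0) q P (n + 1)) :
    HasExpansion (𝓝[≠] 0) (fun z => q z / z) (fun z => P z / z) n := by
  refine (IsLittleO.mul_isBigO h (isBigO_refl (fun z : ℂ => z⁻¹) _)).congr'
    (.of_forall fun z => by ring) ?_
  filter_upwards [self_mem_nhdsWithin] with z (hz : z ≠ 0)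
  field_simp
  ring

theorem const_eq {a b : ℂ} [l.NeBot] (h : HasExpansion l (fun _ => a) (fun _ => b) 0) :
    a = b := by
  have : Tendsto (fun _ : ℂ => a - b) l (𝓝 0) :=
    (isLittleO_const_iff (c := (1 : ℂ)) one_ne_zero).1 (by simpa [HasExpansion] using h)
  exact sub_eq_zero.1 (tendsto_const_nhds_iff.1 this)

theorem eq_and_of_const_add_mul_id {a b : ℂ}
    (h : HasExpansion (𝓝[≠] 0) (fun z => a + z * S z) (fun z => b + z * W z) (n + 1))
    (hS : ContinuousAt S 0) (hW : ContinuousAt W 0) : a = b ∧ HasExpansion (𝓝[≠] 0) S W n := by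
  have hl : 𝓝[≠] (0 : ℂ) ≤ 𝓝 0 := nhdsWithin_le_nhds
  have hlim : Tendsto (fun z => a + z * S z) (𝓝[≠] 0) (𝓝 a) := by
    have : ContinuousAt (fun z => a + z * S z) 0 := by fun_prop
    simpa using this.tendsto.mono_left hl
  have hab : a = b := by
    simpa using tendsto_nhds_unique hlim (h.tendsto hl (by fun_prop))
  subst hab
  refine ⟨rfl, ?_⟩
  have hz : HasExpansion (𝓝[≠] 0) (fun z => z * S z) (fun z => z * W z) (n + 1) := by
    unfold HasExpansion at h ⊢
    exact h.congr_left fun z => by ring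
  have hne : ∀ᶠ z in 𝓝[≠] (0 : ℂ), z ≠ 0 := self_mem_nhdsWithin
  refine (hz.div_id.congr_left ?_).congr_right ?_ <;>
    filter_upwards [hne] with z hz <;> field_simp

theorem coeffs_eq₂ {a₀ a₁ a₂ b₀ b₁ b₂ : ℂ}
    (h : HasExpansion (𝓝[≠] 0) (fun z => a₀ + a₁ * z + a₂ * z ^ 2)
      (fun z => b₀ + b₁ * z + b₂ * z ^ 2) 2) :
    a₀ = b₀ ∧ a₁ = b₁ ∧ a₂ = b₂ := by
  obtain ⟨h₀, h⟩ := ((h.congr_left (p := fun z => a₀ + z * (a₁ + z * a₂))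
    (.of_forall fun z => by ring)).congr_right (Q := fun z => b₀ + z * (b₁ + z * b₂))
    (.of_forall fun z => by ring)).eq_and_of_const_add_mul_id (by fun_prop) (by fun_prop)
  obtain ⟨h₁, h⟩ := h.eq_and_of_const_add_mul_id (S := fun _ => a₂) (W := fun _ => b₂)
    (by fun_prop) (by fun_prop)
  exact ⟨h₀, h₁, h.const_eq⟩

theorem coeffs_eq₃ {a₀ a₁ a₂ a₃ b₀ b₁ b₂ b₃ : ℂ}
    (h : HasExpansion (𝓝[≠] 0) (fun z => a₀ + a₁ * z + a₂ * z ^ 2 + a₃ * z ^ 3)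
      (fun z => b₀ + b₁ * z + b₂ * z ^ 2 + b₃ * z ^ 3) 3) :
    a₀ = b₀ ∧ a₁ = b₁ ∧ a₂ = b₂ ∧ a₃ = b₃ := by
  obtain ⟨h₀, h⟩ := ((h.congr_left (p := fun z => a₀ + z * (a₁ + a₂ * z + a₃ * z ^ 2))
    (.of_forall fun z => by ring)).congr_right
    (Q := fun z => b₀ + z * (b₁ + b₂ * z + b₃ * z ^ 2))
    (.of_forall fun z => by ring)).eq_and_of_const_add_mul_id (by fun_prop) (by fun_prop)
  exact ⟨h₀, h.coeffs_eq₂⟩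

end HasExpansion

theorem tc_eq_coeff {h : ℂ → ℂ} {p : FormalMultilinearSeries ℂ ℂ ℂ}
    (hp : HasFPowerSeriesAt h p 0) (n : ℕ) : tc h n = p.coeff n := by
  obtain ⟨r, hr⟩ := hp
  have hfac : (n.factorial : ℂ) ≠ 0 := by exact_mod_cast n.factorial_ne_zero
  rw [tc, iteratedDeriv_eq_iteratedFDeriv, ← hr.factorial_smul 1 n,
    FormalMultilinearSeries.apply_eq_pow_smul_coeff, nsmul_eq_mul]
  field_simp
  simp

theorem tc_zero (h : ℂ → ℂ) : tc h 0 = h 0 := by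
  simp [tc]

theorem tc_one (h : ℂ → ℂ) : tc h 1 = deriv h 0 := by
  simp [tc]

theorem tc_deriv (h : ℂ → ℂ) (n : ℕ) : tc (deriv h) n = (n + 1) * tc h (n + 1) := by
  have hfac : (n.factorial : ℂ) ≠ 0 := by exact_mod_cast n.factorial_ne_zero
  rw [tc, tc, ← iteratedDeriv_succ', Nat.factorial_succ]
  push_cast
  field_simp

theorem hasExpansion_of_analyticAt {h : ℂ → ℂ} (hh : AnalyticAt ℂ h 0) (n : ℕ) :
    HasExpansion (𝓝 0) h (fun z => ∑ i ∈ Finset.range (n + 1), tc h i * z ^ i) n := by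
  obtain ⟨p, hp⟩ := hh
  refine HasExpansion.of_isBigO ?_ le_rfl
  have hnorm : (fun z : ℂ => ‖z‖ ^ (n + 1)) =O[𝓝 0] fun z => z ^ (n + 1) :=
    (isBigO_refl _ _).norm_left.congr_left fun z => norm_pow z (n + 1)
  refine ((hp.isBigO_sub_partialSum_pow (n + 1)).trans hnorm).congr_left fun z => ?_
  simp [FormalMultilinearSeries.partialSum, tc_eq_coeff hp, mul_comm]

theorem hasExpansion_exp : HasExpansion (𝓝 0) exp (fun x => 1 + x + x ^ 2 / 2) 2 := by
  have htc (i : ℕ) : tc exp i = 1 / i.factorial := by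
    simp [tc, iteratedDeriv_eq_iterate, Complex.iter_deriv_exp]
  refine (hasExpansion_of_analyticAt analyticAt_cexp 2).congr_right (.of_forall fun x => ?_)
  simp [Finset.sum_range_succ, htc]
  ring

theorem hasExpansion_log_one_add :
    HasExpansion (𝓝 0) (fun x => log (1 + x)) (fun x => x - x ^ 2 / 2) 2 := by
  refine HasExpansion.of_isBigO ((log_sub_logTaylor_isBigO 2).congr_left fun x => ?_) le_rfl
  simp [logTaylor, Finset.sum_range_succ]
  ring

theorem hasExpansion_inv_one_add :
    HasExpansion (𝓝 0) (fun x => (1 + x)⁻¹) (fun x => 1 - x + x ^ 2) 2 := by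
  refine (HasExpansion.refl _ _ 2).trunc le_rfl (S := fun x => -(1 + x)⁻¹)
    (by fun_prop (disch := norm_num)) ?_
  filter_upwards [eventually_ne_nhds (show (0 : ℂ) ≠ -1 by norm_num)] with x hx
  have hx' : 1 + x ≠ 0 := fun h => hx (by linear_combination h)
  field_simp
  ring

namespace HasExpansion

variable {l : Filter ℂ} {p q w ψ V W : ℂ → ℂ} {n : ℕ}

theorem sub_const (h : HasExpansion l q W n) (c : ℂ) :
    HasExpansion l (fun z => q z - c) (fun z => W z - c) n := by
  unfold HasExpansion at h ⊢
  exact h.congr_left fun z => by ring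

theorem isBigO_id (hw : HasExpansion l w (fun z => z * V z) (n + 1)) (hl : l ≤ 𝓝 0)
    (hV : ContinuousAt V 0) : w =O[l] fun z => z := by
  have hpow : (fun z : ℂ => z ^ (n + 1)) =O[l] fun z => z := by
    simpa [pow_succ'] using (isBigO_refl (fun z : ℂ => z) l).mul
      ((((continuous_pow n).tendsto 0).mono_left hl).isBigO_one ℂ)
  have hW : (fun z => z * V z) =O[l] fun z => z := by
    simpa using (isBigO_refl (fun z : ℂ => z) l).mul ((hV.tendsto.mono_left hl).isBigO_one ℂ)
  exact ((IsLittleO.isBigO hw).trans hpow |>.add hW).congr_left fun z => by ring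

variable {s₀ s₁ s₂ s₃ e₁ e₂ e₃ p₀ p₁ p₂ q₀ q₁ q₂ : ℂ}

theorem comp₂ (hl : l ≤ 𝓝 0)
    (hψ : HasExpansion (𝓝 0) ψ (fun x => s₀ + s₁ * x + s₂ * x ^ 2) 2)
    (hw : HasExpansion l w (fun z => e₁ * z + e₂ * z ^ 2) 2) :
    HasExpansion l (fun z => ψ (w z))
      (fun z => s₀ + s₁ * e₁ * z + (s₁ * e₂ + s₂ * e₁ ^ 2) * z ^ 2) 2 := by
  have hwt : Tendsto w l (𝓝 0) := by simpa using hw.tendsto hl (by fun_prop)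
  have hwO : w =O[l] fun z => z :=
    (hw.congr_right (.of_forall fun z => by ring)).isBigO_id (V := fun z => e₁ + e₂ * z) hl
      (by fun_prop)
  have hWb : (fun z => e₁ * z + e₂ * z ^ 2) =O[l] fun _ => (1 : ℂ) :=
    (refl l _ 2).isBigO_one hl (by fun_prop)
  have hsubst : HasExpansion l (fun z => s₀ + s₁ * w z + s₂ * w z ^ 2)
      (fun z => s₀ + s₁ * (e₁ * z + e₂ * z ^ 2) + s₂ * (e₁ * z + e₂ * z ^ 2) ^ 2) 2 :=
    ((refl l (fun _ => s₀) 2).add (hw.const_mul s₁)).add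
      ((hw.pow (hwt.isBigO_one ℂ) hWb 2).const_mul s₂)
  exact ((hψ.comp hwt hwO).trans hsubst).trunc hl
    (S := fun z => s₂ * (2 * e₁ * e₂ + e₂ ^ 2 * z)) (by fun_prop) (.of_forall fun z => by ring)

theorem comp₃ (hl : l ≤ 𝓝 0)
    (hψ : HasExpansion (𝓝 0) ψ (fun x => s₀ + s₁ * x + s₂ * x ^ 2 + s₃ * x ^ 3) 3)
    (hw : HasExpansion l w (fun z => e₁ * z + e₂ * z ^ 2 + e₃ * z ^ 3) 3) :
    HasExpansion l (fun z => ψ (w z))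
      (fun z => s₀ + s₁ * e₁ * z + (s₁ * e₂ + s₂ * e₁ ^ 2) * z ^ 2
        + (s₁ * e₃ + 2 * s₂ * e₁ * e₂ + s₃ * e₁ ^ 3) * z ^ 3) 3 := by
  have hwt : Tendsto w l (𝓝 0) := by simpa using hw.tendsto hl (by fun_prop)
  have hwO : w =O[l] fun z => z :=
    (hw.congr_right (.of_forall fun z => by ring)).isBigO_id
      (V := fun z => e₁ + e₂ * z + e₃ * z ^ 2) hl (by fun_prop)
  have hWb : (fun z => e₁ * z + e₂ * z ^ 2 + e₃ * z ^ 3) =O[l] fun _ => (1 : ℂ) :=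
    (refl l _ 3).isBigO_one hl (by fun_prop)
  have hsubst : HasExpansion l (fun z => s₀ + s₁ * w z + s₂ * w z ^ 2 + s₃ * w z ^ 3)
      (fun z => s₀ + s₁ * (e₁ * z + e₂ * z ^ 2 + e₃ * z ^ 3)
        + s₂ * (e₁ * z + e₂ * z ^ 2 + e₃ * z ^ 3) ^ 2
        + s₃ * (e₁ * z + e₂ * z ^ 2 + e₃ * z ^ 3) ^ 3) 3 :=
    (((refl l (fun _ => s₀) 3).add (hw.const_mul s₁)).add
      ((hw.pow (hwt.isBigO_one ℂ) hWb 2).const_mul s₂)).add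
      ((hw.pow (hwt.isBigO_one ℂ) hWb 3).const_mul s₃)
  exact ((hψ.comp hwt hwO).trans hsubst).trunc hl
    (S := fun z => s₂ * (e₂ ^ 2 + 2 * e₁ * e₃ + 2 * e₂ * e₃ * z + e₃ ^ 2 * z ^ 2)
      + s₃ * (3 * e₁ ^ 2 * e₂ + (3 * e₁ ^ 2 * e₃ + 3 * e₁ * e₂ ^ 2) * z
        + (e₂ ^ 3 + 6 * e₁ * e₂ * e₃) * z ^ 2 + (3 * e₁ * e₃ ^ 2 + 3 * e₂ ^ 2 * e₃) * z ^ 3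
        + 3 * e₂ * e₃ ^ 2 * z ^ 4 + e₃ ^ 3 * z ^ 5))
    (by fun_prop) (.of_forall fun z => by ring)

theorem mul₂ (hl : l ≤ 𝓝 0) (hp : HasExpansion l p (fun z => p₀ + p₁ * z + p₂ * z ^ 2) 2)
    (hq : HasExpansion l q (fun z => q₀ + q₁ * z + q₂ * z ^ 2) 2) :
    HasExpansion l (fun z => p z * q z) (fun z => p₀ * q₀ + (p₀ * q₁ + p₁ * q₀) * z
      + (p₀ * q₂ + p₁ * q₁ + p₂ * q₀) * z ^ 2) 2 :=
  (hp.mul hq (hp.isBigO_one hl (by fun_prop)) ((refl l _ 2).isBigO_one hl (by fun_prop))).trunc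
    hl (S := fun z => p₁ * q₂ + p₂ * q₁ + p₂ * q₂ * z) (by fun_prop) (.of_forall fun z => by ring)

theorem inv₂ (hl : l ≤ 𝓝 0) (hq : HasExpansion l q (fun z => 1 + q₁ * z + q₂ * z ^ 2) 2) :
    HasExpansion l (fun z => (q z)⁻¹) (fun z => 1 + -q₁ * z + (q₁ ^ 2 - q₂) * z ^ 2) 2 := by
  have hψ := hasExpansion_inv_one_add.congr_right
    (Q := fun x => 1 + (-1) * x + 1 * x ^ 2) (.of_forall fun x => by ring)
  have hw := (hq.sub_const 1).congr_right (Q := fun z => q₁ * z + q₂ * z ^ 2)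
    (.of_forall fun z => by ring)
  exact ((hψ.comp₂ hl hw).congr_left (.of_forall fun z => by simp)).congr_right
    (.of_forall fun z => by ring)

theorem log₂ (hl : l ≤ 𝓝 0) (hq : HasExpansion l q (fun z => 1 + q₁ * z + q₂ * z ^ 2) 2) :
    HasExpansion l (fun z => log (q z)) (fun z => q₁ * z + (q₂ - q₁ ^ 2 / 2) * z ^ 2) 2 := by
  have hψ := hasExpansion_log_one_add.congr_right
    (Q := fun x => 0 + 1 * x + (-1 / 2) * x ^ 2) (.of_forall fun x => by ring)
  have hw := (hq.sub_const 1).congr_right (Q := fun z => q₁ * z + q₂ * z ^ 2)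
    (.of_forall fun z => by ring)
  exact ((hψ.comp₂ hl hw).congr_left (.of_forall fun z => by simp)).congr_right
    (.of_forall fun z => by ring)

theorem exp₂ (hl : l ≤ 𝓝 0) (hw : HasExpansion l w (fun z => e₁ * z + e₂ * z ^ 2) 2) :
    HasExpansion l (fun z => exp (w z))
      (fun z => 1 + e₁ * z + (e₂ + e₁ ^ 2 / 2) * z ^ 2) 2 := by
  have hψ := hasExpansion_exp.congr_right
    (Q := fun x => 1 + 1 * x + (1 / 2) * x ^ 2) (.of_forall fun x => by ring)
  exact (hψ.comp₂ hl hw).congr_right (.of_forall fun z => by ring)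

theorem cpow₂ (hl : l ≤ 𝓝 0) (hq : HasExpansion l q (fun z => 1 + q₁ * z + q₂ * z ^ 2) 2)
    (s : ℂ) : HasExpansion l (fun z => q z ^ s)
      (fun z => 1 + s * q₁ * z + (s * q₂ + s * (s - 1) / 2 * q₁ ^ 2) * z ^ 2) 2 := by
  have hne : ∀ᶠ z in l, q z ≠ 0 := (hq.tendsto hl (by fun_prop)).eventually_ne (by simp)
  have hS := ((hq.log₂ hl).const_mul s).congr_right
    (Q := fun z => s * q₁ * z + s * (q₂ - q₁ ^ 2 / 2) * z ^ 2) (.of_forall fun z => by ring)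
  refine ((hS.exp₂ hl).congr_left ?_).congr_right (.of_forall fun z => by ring)
  filter_upwards [hne] with z hz
  rw [cpow_def_of_ne_zero hz, mul_comm]

end HasExpansion

section Coefficients

variable {f g u φ : ℂ → ℂ}

theorem hasExpansion_normalized (hf : AnalyticAt ℂ f 0) (hf0 : f 0 = 0) (hf1 : deriv f 0 = 1) :
    HasExpansion (𝓝 0) f (fun z => 1 * z + tc f 2 * z ^ 2 + tc f 3 * z ^ 3) 3 :=
  (hasExpansion_of_analyticAt hf 3).congr_right (.of_forall fun z => by
    simp [Finset.sum_range_succ, tc_zero, tc_one, hf0, hf1])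

theorem hasExpansion_deriv_normalized (hf : AnalyticAt ℂ f 0) (hf1 : deriv f 0 = 1) :
    HasExpansion (𝓝 0) (deriv f) (fun z => 1 + 2 * tc f 2 * z + 3 * tc f 3 * z ^ 2) 2 :=
  (hasExpansion_of_analyticAt hf.deriv 2).congr_right (.of_forall fun z => by
    simp [Finset.sum_range_succ, tc_deriv, tc_one, hf1]
    ring)

theorem hasExpansion_starlikeQuotient (hf : AnalyticAt ℂ f 0) (hf0 : f 0 = 0)
    (hf1 : deriv f 0 = 1) :
    HasExpansion (𝓝[≠] 0) (fun z => z * deriv f z / f z)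
      (fun z => 1 + tc f 2 * z + (2 * tc f 3 - tc f 2 ^ 2) * z ^ 2) 2 := by
  have hl : 𝓝[≠] (0 : ℂ) ≤ 𝓝 0 := nhdsWithin_le_nhds
  have hfz : HasExpansion (𝓝[≠] 0) (fun z => f z / z)
      (fun z => 1 + tc f 2 * z + tc f 3 * z ^ 2) 2 := by
    refine ((hasExpansion_normalized hf hf0 hf1).mono hl).div_id.congr_right ?_
    filter_upwards [self_mem_nhdsWithin] with z (hz : z ≠ 0)
    field_simp
  refine ((((hasExpansion_deriv_normalized hf hf1).mono hl).mul₂ hl (hfz.inv₂ hl)).congr_left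
    (.of_forall fun z => ?_)).congr_right (.of_forall fun z => by ring)
  simp only [inv_div]
  ring

theorem hasExpansion_convexQuotient (hf : AnalyticAt ℂ f 0) (hf1 : deriv f 0 = 1) :
    HasExpansion (𝓝 0) (fun z => 1 + z * iteratedDeriv 2 f z / deriv f z)
      (fun z => 1 + 2 * tc f 2 * z + (6 * tc f 3 - 4 * tc f 2 ^ 2) * z ^ 2) 2 := by
  have hf'' : HasExpansion (𝓝 0) (fun z => z * deriv (deriv f) z)
      (fun z => 0 + 2 * tc f 2 * z + 6 * tc f 3 * z ^ 2) 2 :=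
    ((hasExpansion_of_analyticAt hf.deriv.deriv 1).mul_id).congr_right (.of_forall fun z => by
      simp [Finset.sum_range_succ, tc_deriv]
      ring)
  have hquot := hf''.mul₂ le_rfl ((hasExpansion_deriv_normalized hf hf1).inv₂ le_rfl)
  refine (((HasExpansion.refl _ (fun _ => 1) 2).add hquot).congr_left (.of_forall fun z => ?_))
    |>.congr_right (.of_forall fun z => by ring)
  rw [iteratedDeriv_succ, iteratedDeriv_one]
  ring

theorem hasExpansion_gammaStarlike (hf : AnalyticAt ℂ f 0) (hf0 : f 0 = 0)
    (hf1 : deriv f 0 = 1) (α : ℂ) :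
    HasExpansion (𝓝[≠] 0)
      (fun z => (z * deriv f z / f z) ^ α * (1 + z * iteratedDeriv 2 f z / deriv f z) ^ (1 - α))
      (fun z => 1 + (2 - α) * tc f 2 * z
        + (2 * (3 - 2 * α) * tc f 3 + (α ^ 2 + 5 * α - 8) / 2 * tc f 2 ^ 2) * z ^ 2) 2 := by
  have hl : 𝓝[≠] (0 : ℂ) ≤ 𝓝 0 := nhdsWithin_le_nhds
  exact (((hasExpansion_starlikeQuotient hf hf0 hf1).cpow₂ hl α).mul₂ hl
    (((hasExpansion_convexQuotient hf hf1).mono hl).cpow₂ hl (1 - α))).congr_right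
    (.of_forall fun z => by ring)

theorem coeffs_of_subordination {α : ℂ} (hf : AnalyticAt ℂ f 0) (hf0 : f 0 = 0)
    (hf1 : deriv f 0 = 1) (hu : AnalyticAt ℂ u 0) (hu0 : u 0 = 0) (hφ : AnalyticAt ℂ φ 0)
    (hφ0 : φ 0 = 1)
    (hsub : ∀ᶠ z in 𝓝[≠] 0, (z * deriv f z / f z) ^ α
      * (1 + z * iteratedDeriv 2 f z / deriv f z) ^ (1 - α) = φ (u z)) :
    (2 - α) * tc f 2 = tc φ 1 * tc u 1 ∧
      2 * (3 - 2 * α) * tc f 3 + (α ^ 2 + 5 * α - 8) / 2 * tc f 2 ^ 2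
        = tc φ 1 * tc u 2 + tc φ 2 * tc u 1 ^ 2 := by
  have hl : 𝓝[≠] (0 : ℂ) ≤ 𝓝 0 := nhdsWithin_le_nhds
  have hφE : HasExpansion (𝓝 0) φ (fun x => 1 + tc φ 1 * x + tc φ 2 * x ^ 2) 2 :=
    (hasExpansion_of_analyticAt hφ 2).congr_right (.of_forall fun x => by
      simp [Finset.sum_range_succ, tc_zero, hφ0])
  have huE : HasExpansion (𝓝[≠] 0) u (fun z => tc u 1 * z + tc u 2 * z ^ 2) 2 :=
    ((hasExpansion_of_analyticAt hu 2).mono hl).congr_right (.of_forall fun z => by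
      simp [Finset.sum_range_succ, tc_zero, hu0])
  obtain ⟨-, h₁, h₂⟩ := (((hasExpansion_gammaStarlike hf hf0 hf1 α).congr_left hsub).symm.trans
    (hφE.comp₂ hl huE)).coeffs_eq₂
  exact ⟨by linear_combination h₁, by linear_combination h₂⟩

theorem coeffs_of_leftInverse (hf : AnalyticAt ℂ f 0) (hf0 : f 0 = 0) (hf1 : deriv f 0 = 1)
    (hg : AnalyticAt ℂ g 0) (hinv : ∀ᶠ z in 𝓝 0, g (f z) = z) :
    g 0 = 0 ∧ deriv g 0 = 1 ∧ tc g 2 = -tc f 2 ∧ tc g 3 = 2 * tc f 2 ^ 2 - tc f 3 := by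
  have hg0 : g 0 = 0 := by simpa [hf0] using hinv.self_of_nhds
  have hgE : HasExpansion (𝓝 0) g
      (fun x => 0 + tc g 1 * x + tc g 2 * x ^ 2 + tc g 3 * x ^ 3) 3 :=
    (hasExpansion_of_analyticAt hg 3).congr_right (.of_forall fun x => by
      simp [Finset.sum_range_succ, tc_zero, hg0])
  have hid : HasExpansion (𝓝 0) (fun z => g (f z)) (fun z => 0 + 1 * z + 0 * z ^ 2 + 0 * z ^ 3) 3 :=
    ((HasExpansion.refl _ (fun z => z) 3).congr_left (hinv.mono fun z hz => hz.symm)).congr_right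
      (.of_forall fun z => by ring)
  obtain ⟨-, h₁, h₂, h₃⟩ := (((hgE.comp₃ le_rfl (hasExpansion_normalized hf hf0 hf1)).symm.trans
    hid).mono nhdsWithin_le_nhds).coeffs_eq₃
  refine ⟨hg0, by rw [← tc_one]; linear_combination h₁, by linear_combination h₂ - tc f 2 * h₁,
    by linear_combination h₃ - 2 * tc f 2 * h₂ + (2 * tc f 2 ^ 2 - tc f 3) * h₁⟩

end Coefficients

theorem one_sub_conj_mul_ne_zero {a x : ℂ} (ha : ‖a‖ < 1) (hx : ‖x‖ ≤ 1) :
    1 - conj a * x ≠ 0 := by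
  intro h
  have hlt : ‖conj a * x‖ < 1 := by
    rw [norm_mul, RCLike.norm_conj]
    nlinarith [norm_nonneg a, norm_nonneg x]
  rw [← sub_eq_zero.1 h, norm_one] at hlt
  exact hlt.false

theorem norm_sub_div_one_sub_conj_mul_le_one {a x : ℂ} (ha : ‖a‖ < 1) (hx : ‖x‖ ≤ 1) :
    ‖(x - a) / (1 - conj a * x)‖ ≤ 1 := by
  rw [norm_div, div_le_one (norm_pos_iff.2 (one_sub_conj_mul_ne_zero ha hx))]
  have key : ‖1 - conj a * x‖ ^ 2 - ‖x - a‖ ^ 2 = (1 - ‖a‖ ^ 2) * (1 - ‖x‖ ^ 2) := by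
    simp only [← normSq_eq_norm_sq, normSq_apply, sub_re, sub_im, mul_re, mul_im, conj_re,
      conj_im, one_re, one_im]
    ring
  have ha' : 0 ≤ 1 - ‖a‖ ^ 2 := by nlinarith [norm_nonneg a]
  have hx' : 0 ≤ 1 - ‖x‖ ^ 2 := by nlinarith [norm_nonneg x]
  exact (sq_le_sq₀ (norm_nonneg _) (norm_nonneg _)).1 (by nlinarith [mul_nonneg ha' hx'])

theorem norm_deriv_le_one_sub_sq {w : ℂ → ℂ} (hd : DifferentiableOn ℂ w (ball 0 1))
    (hw : Set.MapsTo w (ball 0 1) (closedBall 0 1)) : ‖deriv w 0‖ ≤ 1 - ‖w 0‖ ^ 2 := by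
  have h0 : (0 : ℂ) ∈ ball (0 : ℂ) 1 := mem_ball_self one_pos
  have hle : ∀ z ∈ ball (0 : ℂ) 1, ‖w z‖ ≤ 1 := fun z hz => by simpa using hw hz
  rcases (hle 0 h0).eq_or_lt with heq | hlt
  · have hmax : IsMaxOn (norm ∘ w) (ball 0 1) 0 := fun z hz => by simpa [heq] using hle z hz
    have hconst : w =ᶠ[𝓝 0] fun _ => w 0 := by
      filter_upwards [isOpen_ball.mem_nhds h0] with z hz using
        Complex.eqOn_of_isPreconnected_of_isMaxOn_norm (convex_ball 0 1).isPreconnected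
          isOpen_ball hd h0 hmax hz
    rw [hconst.deriv_eq, deriv_const, heq]
    norm_num
  · set a := w 0
    have hden : ∀ z ∈ ball (0 : ℂ) 1, 1 - conj a * w z ≠ 0 := fun z hz =>
      one_sub_conj_mul_ne_zero hlt (hle z hz)
    -- Composing with the disc automorphism sending `a` to `0` reduces to the Schwarz lemma.
    set τ := fun z => (w z - a) / (1 - conj a * w z)
    have hτd : DifferentiableOn ℂ τ (ball 0 1) :=
      (hd.sub_const a).div ((differentiableOn_const 1).sub ((differentiableOn_const _).mul hd)) hden
    have hτ : Set.MapsTo τ (ball 0 1) (closedBall (τ 0) 1) := fun z hz => by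
      simpa [τ, a] using norm_sub_div_one_sub_conj_mul_le_one hlt (hle z hz)
    have hτ' : ‖deriv τ 0‖ ≤ 1 := by
      simpa using Complex.norm_deriv_le_div_of_mapsTo_ball hτd hτ one_pos
    have hw' := (hd.differentiableAt (isOpen_ball.mem_nhds h0)).hasDerivAt
    have hpos : 0 < 1 - ‖a‖ ^ 2 := by nlinarith [norm_nonneg a]
    have hderiv : deriv τ 0 = deriv w 0 / (1 - ‖a‖ ^ 2 : ℝ) := by
      have hτ'' : HasDerivAt τ _ 0 :=
        (hw'.sub_const a).div ((hw'.const_mul (conj a)).const_sub 1) (hden 0 h0)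
      have hden0 : 1 - conj a * a ≠ 0 := hden 0 h0
      rw [hτ''.deriv, show w 0 = a from rfl, sub_self, zero_mul, sub_zero]
      push_cast
      rw [← conj_mul']
      field_simp
    rw [hderiv, norm_div, norm_real, Real.norm_of_nonneg hpos.le, div_le_one hpos] at hτ'
    exact hτ'

theorem norm_tc_two_add_sq_le_one {u : ℂ → ℂ} (hu : DifferentiableOn ℂ u (ball 0 1))
    (hmaps : Set.MapsTo u (ball 0 1) (ball 0 1)) (hu0 : u 0 = 0) : ‖tc u 2 + tc u 1 ^ 2‖ ≤ 1 := by
  have h0 : ball (0 : ℂ) 1 ∈ 𝓝 0 := ball_mem_nhds 0 one_pos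
  obtain ⟨p, hp⟩ := hu.analyticAt h0
  have hw0 : dslope u 0 0 = tc u 1 := by rw [dslope_same, tc_one]
  have hw1 : deriv (dslope u 0) 0 = tc u 2 := by
    rw [hp.has_fpower_series_dslope_fslope.deriv]
    exact (FormalMultilinearSeries.coeff_fslope ..).trans (tc_eq_coeff hp 2).symm
  have hwb : Set.MapsTo (dslope u 0) (ball 0 1) (closedBall 0 1) := fun z hz => by
    have hmaps' : Set.MapsTo u (ball 0 1) (closedBall (u 0) 1) := by
      simpa [hu0] using hmaps.mono_right ball_subset_closedBall
    simpa using Complex.norm_dslope_le_div_of_mapsTo_ball hu hmaps' hz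
  have hpick := norm_deriv_le_one_sub_sq ((Complex.differentiableOn_dslope h0).2 hu) hwb
  rw [hw0, hw1] at hpick
  calc ‖tc u 2 + tc u 1 ^ 2‖ ≤ ‖tc u 2‖ + ‖tc u 1‖ ^ 2 :=
        (norm_add_le _ _).trans_eq (by rw [norm_pow])
    _ ≤ 1 := by linarith

theorem norm_le_of_mul_sq_eq {D B : ℝ} {x s t : ℂ} (hD : D ≠ 0) (hB : 0 < B) (hs : ‖s‖ ≤ 1)
    (ht : ‖t‖ ≤ 1) (h : (D : ℂ) * x ^ 2 = 2 * B ^ 3 * (s + t)) :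
    ‖x‖ ≤ 2 * B * Real.sqrt B / Real.sqrt |D| := by
  have hnorm : |D| * ‖x‖ ^ 2 ≤ 4 * B ^ 3 := by
    have h' := congrArg norm h
    simp only [norm_mul, norm_pow, norm_real, Real.norm_eq_abs, norm_ofNat] at h'
    have hst : ‖s + t‖ ≤ 2 := (norm_add_le s t).trans (by linarith)
    rw [h', abs_of_pos hB]
    nlinarith [pow_pos hB 3]
  rw [le_div_iff₀ (Real.sqrt_pos.2 (abs_pos.2 hD))]
  calc ‖x‖ * Real.sqrt |D| = Real.sqrt (|D| * ‖x‖ ^ 2) := by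
        rw [Real.sqrt_mul (abs_nonneg D), Real.sqrt_sq (norm_nonneg x), mul_comm]
    _ ≤ Real.sqrt (4 * B ^ 3) := Real.sqrt_le_sqrt hnorm
    _ = 2 * B * Real.sqrt B := by
        rw [show 4 * B ^ 3 = (2 * B) ^ 2 * B by ring, Real.sqrt_mul (by positivity),
          Real.sqrt_sq (by positivity)]

theorem stmt17_general (f g u v φ : ℂ → ℂ) (α B₁ B₂ : ℝ)
    (hf : AnalyticOn ℂ f (ball (0:ℂ) 1))
    (hf0 : f 0 = 0) (hf1 : deriv f 0 = 1)
    (hg : AnalyticOn ℂ g (ball (0:ℂ) 1))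
    (hinv : ∀ᶠ z in 𝓝 (0:ℂ), g (f z) = z)
    (hu : AnalyticOn ℂ u (ball (0:ℂ) 1)) (humap : ∀ z ∈ ball (0:ℂ) 1, u z ∈ ball (0:ℂ) 1) (hu0 : u 0 = 0)
    (hv : AnalyticOn ℂ v (ball (0:ℂ) 1)) (hvmap : ∀ w ∈ ball (0:ℂ) 1, v w ∈ ball (0:ℂ) 1) (hv0 : v 0 = 0)
    (hφ : AnalyticOn ℂ φ (ball (0:ℂ) 1)) (hφ0 : φ 0 = 1)
    (hB₁ : tc φ 1 = (B₁ : ℂ)) (hB₂ : tc φ 2 = (B₂ : ℂ)) (hB₁pos : 0 < B₁)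
    (hfu : ∀ z ∈ ball (0:ℂ) 1, z ≠ 0 →
      (z * deriv f z / f z) ^ (α : ℂ)
        * (1 + z * iteratedDeriv 2 f z / deriv f z) ^ (1 - (α : ℂ)) = φ (u z))
    (hgv : ∀ w ∈ ball (0:ℂ) 1, w ≠ 0 →
      (w * deriv g w / g w) ^ (α : ℂ)
        * (1 + w * iteratedDeriv 2 g w / deriv g w) ^ (1 - (α : ℂ)) = φ (v w))
    (hne : 2 * (α ^ 2 - 3 * α + 4) * B₁ ^ 2 + 4 * (α - 2) ^ 2 * (B₁ - B₂) ≠ 0) :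
    ‖tc f 2‖ ≤ 2 * B₁ * Real.sqrt B₁ /
      Real.sqrt |2 * (α ^ 2 - 3 * α + 4) * B₁ ^ 2 + 4 * (α - 2) ^ 2 * (B₁ - B₂)| := by
  have h0 : ball (0 : ℂ) 1 ∈ 𝓝 0 := ball_mem_nhds 0 one_pos
  have hpunct : ∀ᶠ z in 𝓝[≠] (0 : ℂ), z ∈ ball (0 : ℂ) 1 ∧ z ≠ 0 :=
    Eventually.and (nhdsWithin_le_nhds h0) self_mem_nhdsWithin
  have hfA := hf.analyticAt h0
  obtain ⟨hf₁, hf₂⟩ := coeffs_of_subordination hfA hf0 hf1 (hu.analyticAt h0) hu0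
    (hφ.analyticAt h0) hφ0 (hpunct.mono fun z hz => hfu z hz.1 hz.2)
  obtain ⟨hg0, hg1, hb₂, hb₃⟩ := coeffs_of_leftInverse hfA hf0 hf1 (hg.analyticAt h0) hinv
  obtain ⟨hg₁, hg₂⟩ := coeffs_of_subordination (hg.analyticAt h0) hg0 hg1 (hv.analyticAt h0) hv0
    (hφ.analyticAt h0) hφ0 (hpunct.mono fun z hz => hgv z hz.1 hz.2)
  refine norm_le_of_mul_sq_eq hne hB₁pos (norm_tc_two_add_sq_le_one hu.differentiableOn humap hu0)
    (norm_tc_two_add_sq_le_one hv.differentiableOn hvmap hv0) ?_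
  simp only [hB₁, hB₂, hb₂, hb₃] at hf₁ hf₂ hg₁ hg₂
  push_cast
  linear_combination (2 * (B₁ : ℂ) ^ 2) * hf₂ + (2 * (B₁ : ℂ) ^ 2) * hg₂
    + (2 * ((B₁ : ℂ) - B₂) * ((2 - α) * tc f 2 + B₁ * tc u 1)) * hf₁
    + (2 * ((B₁ : ℂ) - B₂) * (B₁ * tc v 1 - (2 - α) * tc f 2)) * hg₁

theorem stmt17 (f g u v φ : ℂ → ℂ) (α B₁ B₂ : ℝ) (hα : 0 ≤ α)
    (hf : AnalyticOn ℂ f (ball (0:ℂ) 1)) (hfinj : Set.InjOn f (ball (0:ℂ) 1))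
    (hf0 : f 0 = 0) (hf1 : deriv f 0 = 1)
    (hg : AnalyticOn ℂ g (ball (0:ℂ) 1)) (hginj : Set.InjOn g (ball (0:ℂ) 1))
    (hinv : ∀ᶠ z in 𝓝 (0:ℂ), g (f z) = z)
    (hu : AnalyticOn ℂ u (ball (0:ℂ) 1)) (humap : ∀ z ∈ ball (0:ℂ) 1, u z ∈ ball (0:ℂ) 1) (hu0 : u 0 = 0)
    (hv : AnalyticOn ℂ v (ball (0:ℂ) 1)) (hvmap : ∀ w ∈ ball (0:ℂ) 1, v w ∈ ball (0:ℂ) 1) (hv0 : v 0 = 0)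
    (hφ : AnalyticOn ℂ φ (ball (0:ℂ) 1)) (hφ0 : φ 0 = 1)
    (hB₁ : tc φ 1 = (B₁ : ℂ)) (hB₂ : tc φ 2 = (B₂ : ℂ)) (hB₁pos : 0 < B₁)
    (hfu : ∀ z ∈ ball (0:ℂ) 1, z ≠ 0 →
      (z * deriv f z / f z) ^ (α : ℂ)
        * (1 + z * iteratedDeriv 2 f z / deriv f z) ^ (1 - (α : ℂ)) = φ (u z))
    (hgv : ∀ w ∈ ball (0:ℂ) 1, w ≠ 0 →
      (w * deriv g w / g w) ^ (α : ℂ)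
        * (1 + w * iteratedDeriv 2 g w / deriv g w) ^ (1 - (α : ℂ)) = φ (v w))
    (hne : 2 * (α ^ 2 - 3 * α + 4) * B₁ ^ 2 + 4 * (α - 2) ^ 2 * (B₁ - B₂) ≠ 0) :
    ‖tc f 2‖ ≤ 2 * B₁ * Real.sqrt B₁ /
      Real.sqrt |2 * (α ^ 2 - 3 * α + 4) * B₁ ^ 2 + 4 * (α - 2) ^ 2 * (B₁ - B₂)| :=
  stmt17_general f g u v φ α B₁ B₂ hf hf0 hf1 hg hinv hu humap hu0 hv hvmap hv0 hφ hφ0 hB₁ hB₂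
    hB₁pos hfu hgv hne
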